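/- In the tree rewriting calculus TK⁺, for all modal trees T and T', the sum T + T' rewrites to T' + T (and conversely), i.e. T + T' and T' + T are TK⁺-equivalent. -/

import Mathlib

inductive MTree : Type where
  | node : List ℕ → List (ℕ × MTree) → MTree

namespace MTree

mutual
def numNodes : MTree → ℕ
  | .node _ Γ => 1 + numNodesL Γ
def numNodesL : List (ℕ × MTree) → ℕ
  | [] => 0
  | (_, t) :: Γ => numNodes t + numNodesL Γ
end

mutual
def height : MTree → ℕ
  | .node _ [] => 0
  | .node _ (p :: Γ) => heightL (p :: Γ) + 1
def heightL : List (ℕ × MTree) → ℕ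
  | [] => 0
  | (_, t) :: Γ => max (height t) (heightL Γ)
end

mutual
def width : MTree → ℕ
  | .node _ [] => 1
  | .node _ (p :: Γ) => max (p :: Γ).length (widthL (p :: Γ))
def widthL : List (ℕ × MTree) → ℕ
  | [] => 0
  | (_, t) :: Γ => max (width t) (widthL Γ)
end

def sum : MTree → MTree → MTree
  | .node Δ Γ, .node Δ' Γ' => .node (Δ ++ Δ') (Γ ++ Γ')

inductive IsPos : List ℕ → MTree → Prop where
  | nil : ∀ t, IsPos [] t
  | cons : ∀ {Δ : List ℕ} {Γ : List (ℕ × MTree)} {i : ℕ} {k : List ℕ}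
      (h : i < Γ.length), IsPos k (Γ.get ⟨i, h⟩).2 → IsPos (i :: k) (.node Δ Γ)

def subtree : List ℕ → MTree → MTree
  | [], t => t
  | i :: k, .node Δ Γ =>
    match Γ[i]? with
    | some p => subtree k p.2
    | none => .node Δ Γ

def replace : List ℕ → MTree → MTree → MTree
  | [], _, s => s
  | i :: k, .node Δ Γ, s =>
      .node Δ (Γ.modify i (fun p => (p.1, replace k p.2 s)))

inductive RhoPlus : MTree → MTree → Prop where
  | mk : ∀ (Δ : List ℕ) (Γ : List (ℕ × MTree)) (i : ℕ) (h : i < Δ.length),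
      RhoPlus (.node Δ Γ) (.node (Δ.get ⟨i, h⟩ :: Δ) Γ)

inductive RhoMinus : MTree → MTree → Prop where
  | mk : ∀ (Δ : List ℕ) (Γ : List (ℕ × MTree)) (i : ℕ), i < Δ.length →
      RhoMinus (.node Δ Γ) (.node (Δ.eraseIdx i) Γ)

inductive Sigma' : MTree → MTree → Prop where
  | mk : ∀ (Δ : List ℕ) (Γ : List (ℕ × MTree)) (i j : ℕ)
      (hi : i < Γ.length) (hj : j < Γ.length), i ≠ j →
      Sigma' (.node Δ Γ) (.node Δ ((Γ.set i (Γ.get ⟨j, hj⟩)).set j (Γ.get ⟨i, hi⟩)))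

inductive PiPlus : MTree → MTree → Prop where
  | mk : ∀ (Δ : List ℕ) (Γ : List (ℕ × MTree)) (i : ℕ) (h : i < Γ.length),
      PiPlus (.node Δ Γ) (.node Δ (Γ.get ⟨i, h⟩ :: Γ))

inductive PiMinus : MTree → MTree → Prop where
  | mk : ∀ (Δ : List ℕ) (Γ : List (ℕ × MTree)) (i : ℕ), i < Γ.length →
      PiMinus (.node Δ Γ) (.node Δ (Γ.eraseIdx i))

inductive FourR : MTree → MTree → Prop where
  | mk : ∀ (Δ : List ℕ) (Γ : List (ℕ × MTree)) (i : ℕ) (h : i < Γ.length)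
      (β : ℕ) (s : MTree),
      Γ.get ⟨i, h⟩ = (β, .node [] [(β, s)]) →
      FourR (.node Δ Γ) (.node Δ (Γ.set i (β, s)))

inductive MonoR : MTree → MTree → Prop where
  | mk : ∀ (Δ : List ℕ) (Γ : List (ℕ × MTree)) (i : ℕ) (h : i < Γ.length)
      (α β : ℕ) (s : MTree),
      Γ.get ⟨i, h⟩ = (α, s) → β < α →
      MonoR (.node Δ Γ) (.node Δ (Γ.set i (β, s)))

inductive JayR : MTree → MTree → Prop where
  | mk : ∀ (Δ : List ℕ) (Γ : List (ℕ × MTree)) (i j : ℕ)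
      (hi : i < Γ.length) (hj : j < Γ.length)
      (α β : ℕ) (Δ' : List ℕ) (Γ' : List (ℕ × MTree)) (s : MTree),
      i ≠ j → Γ.get ⟨i, hi⟩ = (α, .node Δ' Γ') → Γ.get ⟨j, hj⟩ = (β, s) → β < α →
      JayR (.node Δ Γ)
        (.node Δ ((Γ.set i (α, .node Δ' (Γ' ++ [(β, s)]))).eraseIdx j))

inductive Ax : Type where
  | four | mono | jay
deriving DecidableEq

def axRule : Ax → MTree → MTree → Prop
  | .four => FourR
  | .mono => MonoR
  | .jay  => JayR

def rootStep (A : Set Ax) (t t' : MTree) : Prop :=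
  RhoPlus t t' ∨ RhoMinus t t' ∨ Sigma' t t' ∨ PiPlus t t' ∨ PiMinus t t' ∨
    ∃ a ∈ A, axRule a t t'

def deepStep (R : MTree → MTree → Prop) (t t' : MTree) : Prop :=
  ∃ k s', IsPos k t ∧ R (subtree k t) s' ∧ t' = replace k t s'

def Rw (A : Set Ax) : MTree → MTree → Prop :=
  Relation.ReflTransGen (deepStep (rootStep A))

end MTree

inductive SPF : Type where
  | top
  | var : ℕ → SPF
  | dia : ℕ → SPF → SPF
  | and : SPF → SPF → SPF

namespace SPF

def md : SPF → ℕ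
  | .top => 0
  | .var _ => 0
  | .dia _ φ => φ.md + 1
  | .and φ ψ => max φ.md ψ.md

def bigAnd : List SPF → SPF
  | [] => .top
  | φ :: l => .and φ (bigAnd l)

def toTree : SPF → MTree
  | .top => .node [] []
  | .var p => .node [p] []
  | .dia α φ => .node [] [(α, toTree φ)]
  | .and φ ψ => (toTree φ).sum (toTree ψ)

end SPF

namespace MTree
mutual
def toForm : MTree → SPF
  | .node Δ Γ => .and (SPF.bigAnd (Δ.map .var)) (toFormL Γ)
def toFormL : List (ℕ × MTree) → SPF
  | [] => .top
  | (α, t) :: Γ => .and (.dia α (toForm t)) (toFormL Γ)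
end
end MTree

inductive Deriv (A : Set MTree.Ax) : SPF → SPF → Prop where
  | refl (φ) : Deriv A φ φ
  | top (φ) : Deriv A φ .top
  | trans {φ ψ χ} : Deriv A φ ψ → Deriv A ψ χ → Deriv A φ χ
  | andE1 (φ ψ) : Deriv A (.and φ ψ) φ
  | andE2 (φ ψ) : Deriv A (.and φ ψ) ψ
  | andI {φ ψ χ} : Deriv A φ ψ → Deriv A φ χ → Deriv A φ (.and ψ χ)
  | dist {φ ψ} (α : ℕ) : Deriv A φ ψ → Deriv A (.dia α φ) (.dia α ψ)
  | four (α : ℕ) (φ) : MTree.Ax.four ∈ A → Deriv A (.dia α (.dia α φ)) (.dia α φ)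
  | mono (α β : ℕ) (φ) : MTree.Ax.mono ∈ A → β < α → Deriv A (.dia α φ) (.dia β φ)
  | jay (α β : ℕ) (φ ψ) : MTree.Ax.jay ∈ A → β < α →
      Deriv A (.and (.dia α φ) (.dia β ψ)) (.dia α (.and φ (.dia β ψ)))

inductive RuleKind : Type where
  | rhoP | rhoM | sigma | piP | piM | four | mono | jay
deriving DecidableEq

def RuleKind.rel : RuleKind → MTree → MTree → Prop
  | .rhoP => MTree.RhoPlus
  | .rhoM => MTree.RhoMinus
  | .sigma => MTree.Sigma'
  | .piP => MTree.PiPlus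
  | .piM => MTree.PiMinus
  | .four => MTree.FourR
  | .mono => MTree.MonoR
  | .jay => MTree.JayR

def listRw : List RuleKind → MTree → MTree → Prop
  | [], t, s => t = s
  | μ :: Ω, t, s => ∃ u, MTree.deepStep μ.rel t u ∧ listRw Ω u s

/-! Rules ρ⁺/π⁺ copy an existing atom/child to the front and ρ⁻/π⁻ erase one, so `⟨Δ; Γ⟩`
rewrites to `⟨Δ'; Γ'⟩` whenever `Δ' ⊆ Δ` and `Γ' ⊆ Γ` as sets: prepend `Δ'`, then erase the old
list behind it (and likewise for children). `T + T'` and `T' + T` have the same atoms and the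
same children, so each rewrites to the other; no permutation rule is needed. -/

section ListRewriting

variable {α β : Type*} {f : List α → β} {r : β → β → Prop}

open Relation

theorem List.reflTransGen_prepend_of_subset
    (dup : ∀ (l : List α) (i : ℕ) (h : i < l.length), r (f l) (f (l[i] :: l)))
    {L l : List α} (hL : L ⊆ l) : ReflTransGen r (f l) (f (L ++ l)) := by
  induction L with
  | nil => exact .refl
  | cons a L ih =>
    obtain ⟨i, hi, hai⟩ := List.getElem_of_mem (List.mem_append_right L (hL List.mem_cons_self))
    refine (ih (List.subset_of_cons_subset hL)).tail ?_
    simpa [hai] using dup (L ++ l) i hi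

theorem List.reflTransGen_append_truncate
    (erase : ∀ (l : List α) (i : ℕ), i < l.length → r (f l) (f (l.eraseIdx i)))
    (L m : List α) : ReflTransGen r (f (L ++ m)) (f L) := by
  induction m with
  | nil => simpa using .refl
  | cons a m ih =>
    refine ReflTransGen.head ?_ ih
    simpa [List.eraseIdx_append_of_length_le] using
      erase (L ++ a :: m) L.length (by simp)

theorem List.reflTransGen_of_subset
    (dup : ∀ (l : List α) (i : ℕ) (h : i < l.length), r (f l) (f (l[i] :: l)))
    (erase : ∀ (l : List α) (i : ℕ), i < l.length → r (f l) (f (l.eraseIdx i)))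
    {l l' : List α} (h : l' ⊆ l) : ReflTransGen r (f l) (f l') :=
  (List.reflTransGen_prepend_of_subset dup h).trans (List.reflTransGen_append_truncate erase l' l)

end ListRewriting

namespace MTree

theorem deepStep_of_rootStep {A : Set Ax} {t t' : MTree} (h : rootStep A t t') :
    deepStep (rootStep A) t t' :=
  ⟨[], t', .nil t, h, rfl⟩

theorem Rw.node_of_subset_atoms {A : Set Ax} {Δ Δ' : List ℕ} (Γ : List (ℕ × MTree))
    (h : Δ' ⊆ Δ) : Rw A (.node Δ Γ) (.node Δ' Γ) :=
  List.reflTransGen_of_subset (f := (node · Γ))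
    (fun Δ i hi => deepStep_of_rootStep (.inl (RhoPlus.mk Δ Γ i hi)))
    (fun Δ i hi => deepStep_of_rootStep (.inr (.inl (RhoMinus.mk Δ Γ i hi)))) h

theorem Rw.node_of_subset_children {A : Set Ax} (Δ : List ℕ) {Γ Γ' : List (ℕ × MTree)}
    (h : Γ' ⊆ Γ) : Rw A (.node Δ Γ) (.node Δ Γ') :=
  List.reflTransGen_of_subset (f := (node Δ ·))
    (fun Γ i hi => deepStep_of_rootStep (.inr (.inr (.inr (.inl (PiPlus.mk Δ Γ i hi))))))
    (fun Γ i hi => deepStep_of_rootStep (.inr (.inr (.inr (.inr (.inl (PiMinus.mk Δ Γ i hi)))))))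
    h

theorem Rw.node_of_subset {A : Set Ax} {Δ Δ' : List ℕ} {Γ Γ' : List (ℕ × MTree)}
    (hΔ : Δ' ⊆ Δ) (hΓ : Γ' ⊆ Γ) : Rw A (.node Δ Γ) (.node Δ' Γ') :=
  (node_of_subset_atoms Γ hΔ).trans (node_of_subset_children Δ' hΓ)

theorem Rw.sum_comm (A : Set Ax) (t t' : MTree) : Rw A (t.sum t') (t'.sum t) := by
  obtain ⟨Δ, Γ⟩ := t
  obtain ⟨Δ', Γ'⟩ := t'
  exact node_of_subset List.perm_append_comm.subset List.perm_append_comm.subset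

end MTree

theorem stmt10 (t t' : MTree) :
    MTree.Rw (∅ : Set MTree.Ax) (t.sum t') (t'.sum t) ∧
    MTree.Rw (∅ : Set MTree.Ax) (t'.sum t) (t.sum t') :=
  ⟨MTree.Rw.sum_comm ∅ t t', MTree.Rw.sum_comm ∅ t' t⟩
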